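/- arXiv:math/0310119 — 4 statements merged into one kernel-verified Lean document; each statement's English description precedes it below -/
import Mathlib

section
/- Let M be a locally compact metric space and suppose M is quasi-homogeneous, i.e., there exists a compact set K ⊆ M such that for every point x ∈ M there is an isometric self-equivalence h : M ≃ᵢ M with h x ∈ K. Then M is a complete metric space. -/
/-!
Local compactness gives a `δ > 0` for which the closed `δ`-thickening of `K` is compact. Moving
any closed `δ`-ball by an isometry into one centred in `K` shows that all closed `δ`-balls are
compact, and a Cauchy sequence eventually stays in one of them.
-/

open Metric

lemma Metric.completeSpace_of_isCompact_closedBall {α : Type*} [PseudoMetricSpace α] {r : ℝ}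
    (hr : 0 < r) (hcompact : ∀ x : α, IsCompact (closedBall x r)) : CompleteSpace α := by
  refine ⟨fun {f} hf => ?_⟩
  obtain ⟨t, htf, ht⟩ : ∃ t ∈ f, ∀ x ∈ t, ∀ y ∈ t, dist x y < r :=
    (Metric.cauchy_iff.1 hf).2 r hr
  obtain ⟨x, hxt⟩ := hf.1.nonempty_of_mem htf
  have hball : closedBall x r ∈ f := Filter.mem_of_superset htf fun y hyt => (ht y hyt x hxt).le
  obtain ⟨y, -, hy⟩ := (hcompact x).isComplete f hf (Filter.le_principal_iff.2 hball)
  exact ⟨y, hy⟩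

/-- Lemma 2.1 (metric form): a locally compact, quasi-homogeneous metric space is complete. -/
theorem quasiHomogeneous_complete {M : Type*} [MetricSpace M] [LocallyCompactSpace M]
    (K : Set M) (hK : IsCompact K)
    (hqh : ∀ x : M, ∃ h : M ≃ᵢ M, h x ∈ K) :
    CompleteSpace M := by
  obtain ⟨δ, hδ, hKδ⟩ := hK.exists_isCompact_cthickening
  refine completeSpace_of_isCompact_closedBall hδ fun x => ?_
  obtain ⟨h, hx⟩ := hqh x
  have hball : IsCompact (closedBall (h x) δ) :=
    hKδ.of_isClosed_subset isClosed_closedBall (closedBall_subset_cthickening hx δ)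
  rw [← h.isometry.preimage_closedBall]
  exact h.toHomeomorph.isCompact_preimage.2 hball
end

section
/- Let M be a noncompact proper metric space (every closed bounded subset of M is compact) and suppose M is quasi-homogeneous, i.e., there exists a compact set K ⊆ M such that for every point x ∈ M there is an isometric self-equivalence h : M ≃ᵢ M with h x ∈ K. Then for every point p ∈ M the orbit { h p : h : M ≃ᵢ M } of p under the group of isometric self-equivalences of M is infinite; equivalently, there are infinitely many points m ∈ M admitting an isometric equivalence h_m : M ≃ᵢ M with h_m m = p. -/
/-- Lemma 2.3 (metric form): in a noncompact proper quasi-homogeneous metric space,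
every point has an infinite orbit under the isometry group; equivalently, there are
infinitely many points `m` admitting an isometric equivalence sending `m` to `p`. -/
theorem quasiHomogeneous_orbit_infinite {M : Type*} [MetricSpace M] [ProperSpace M]
    [NoncompactSpace M]
    (K : Set M) (hK : IsCompact K)
    (hqh : ∀ x : M, ∃ h : M ≃ᵢ M, h x ∈ K)
    (p : M) :
    {m : M | ∃ h : M ≃ᵢ M, h m = p}.Infinite := by
  intro hfin
  obtain ⟨R, hR⟩ := hfin.isBounded.subset_closedBall p
  obtain ⟨C, hC⟩ := hK.isBounded.subset_closedBall p
  have huniv : ¬ Bornology.IsBounded (Set.univ : Set M) := by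
    intro h
    exact NoncompactSpace.noncompact_univ
      (Metric.isCompact_of_isClosed_isBounded isClosed_univ h)
  have hx : ∃ x : M, ¬ x ∈ Metric.closedBall p (R + C + 1) := by
    by_contra hx
    push_neg at hx
    exact huniv (Metric.isBounded_closedBall.subset (fun y _ => hx y))
  obtain ⟨x, hxout⟩ := hx
  obtain ⟨h, hxK⟩ := hqh x
  have hmem : h p ∈ {m : M | ∃ h : M ≃ᵢ M, h m = p} := ⟨h.symm, by simp⟩
  have h1 : dist (h p) p ≤ R := hR hmem
  have h2 : dist (h x) p ≤ C := hC hxK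
  have h3 : dist (h p) (h x) = dist p x := h.isometry.dist_eq p x
  have h4 : ¬ dist x p ≤ R + C + 1 := hxout
  have h5 : dist p x ≤ dist (h p) p + dist (h x) p := by
    calc dist p x = dist (h p) (h x) := h3.symm
      _ ≤ dist (h p) p + dist p (h x) := dist_triangle _ _ _
      _ = dist (h p) p + dist (h x) p := by rw [dist_comm p (h x)]
  rw [dist_comm x p] at h4
  linarith [not_le.mp h4]
end

section
/- Let M be a noncompact proper metric space (every closed bounded subset of M is compact) and suppose M is quasi-homogeneous, i.e., there exists a compact set K ⊆ M such that for every point x ∈ M there is an isometric self-equivalence h : M ≃ᵢ M with h x ∈ K. Let p ∈ M and let s > 0 be such that K is contained in the closed ball of radius s around p. Then there exists a sequence of points q : ℕ → M such that dist (q i) (q j) > 2·s whenever i ≠ j (so the closed balls of radius s centered at the q j are pairwise disjoint), and for every j there is an isometric equivalence h_j : M ≃ᵢ M with h_j (q j) = p. -/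
/-- Quantitative form of Lemma 2.3: in a noncompact proper quasi-homogeneous metric space,
given `p ∈ M` and `s > 0` with `K ⊆ closedBall p s`, there is a sequence of points `q j`,
pairwise at distance `> 2 s` (so the closed `s`-balls around them are pairwise disjoint),
each of which is carried to `p` by some isometric self-equivalence. -/
theorem quasiHomogeneous_separated_orbit {M : Type*} [MetricSpace M] [ProperSpace M]
    [NoncompactSpace M]
    (K : Set M) (hK : IsCompact K)
    (hqh : ∀ x : M, ∃ h : M ≃ᵢ M, h x ∈ K)
    (p : M) (s : ℝ) (hs : 0 < s) (hKs : K ⊆ Metric.closedBall p s) :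
    ∃ q : ℕ → M,
      (∀ i j : ℕ, i ≠ j → 2 * s < dist (q i) (q j)) ∧
      (∀ j : ℕ, ∃ h : M ≃ᵢ M, h (q j) = p) := by
  -- Unboundedness: for every r there is a point farther than r from p.
  have hub : ∀ r : ℝ, ∃ y : M, r < dist y p := by
    intro r
    by_contra hcon
    push_neg at hcon
    have : IsCompact (Set.univ : Set M) := by
      apply (isCompact_closedBall p r).of_isClosed_subset isClosed_univ
      intro y _
      exact Metric.mem_closedBall.2 (hcon y)
    exact noncompact_univ M this
  -- Step map that increases distance to p by more than 4s.
  let F : M → M := fun x => Classical.choose (hub (dist x p + 4 * s))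
  have hF : ∀ x : M, dist x p + 4 * s < dist (F x) p := fun x =>
    Classical.choose_spec (hub (dist x p + 4 * s))
  let f : ℕ → M := fun n => F^[n] p
  have hfstep : ∀ n, dist (f n) p + 4 * s < dist (f (n + 1)) p := by
    intro n
    have : f (n + 1) = F (f n) := Function.iterate_succ_apply' F n p
    rw [this]
    exact hF (f n)
  have hfmono : ∀ i j : ℕ, i < j → dist (f i) p + 4 * s < dist (f j) p := by
    intro i j hij
    induction j with
    | zero => omega
    | succ k ih =>
      rcases Nat.lt_succ_iff_lt_or_eq.mp hij with h | h
      · have h1 := ih h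
        have h2 := hfstep k
        linarith [dist_nonneg (x := f k) (y := p)]
      · subst h; exact hfstep i
  have hfsep : ∀ i j : ℕ, i ≠ j → 4 * s < dist (f i) (f j) := by
    have key : ∀ i j : ℕ, i < j → 4 * s < dist (f i) (f j) := by
      intro i j hij
      have h1 := hfmono i j hij
      have h2 := dist_triangle (f j) (f i) p
      have := dist_comm (f j) (f i)
      linarith
    intro i j hij
    rcases lt_or_gt_of_ne hij with h | h
    · exact key i j h
    · rw [dist_comm]; exact key j i h
  -- Choose isometries carrying f j into K, and pull back p.
  choose h hh using fun n => hqh (f n)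
  refine ⟨fun n => (h n).symm p, ?_, fun n => ⟨h n, (h n).apply_symm_apply p⟩⟩
  intro i j hij
  have hd : ∀ n, dist ((h n).symm p) (f n) ≤ s := by
    intro n
    have : dist ((h n).symm p) (f n) = dist p (h n (f n)) := by
      rw [← (h n).isometry.dist_eq ((h n).symm p) (f n), (h n).apply_symm_apply]
    rw [this, dist_comm]
    exact Metric.mem_closedBall.1 (hKs (hh n))
  have h1 := hd i
  have h2 := hd j
  have h3 := hfsep i j hij
  have h4 := dist_triangle (f i) ((h i).symm p) ((h j).symm p)
  have h5 := dist_triangle ((h i).symm p) ((h j).symm p) (f j)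
  have h6 := dist_comm (f i) ((h i).symm p)
  have h7 := dist_comm ((h j).symm p) (f j)
  linarith [dist_triangle (f i) ((h i).symm p) (f j)]
end

section
/- Let M be a locally compact metric space with distance function d, and suppose M is quasi-homogeneous, i.e., there exists a compact set K ⊆ M such that for every point x ∈ M there is an isometric self-equivalence h : M ≃ᵢ M with h x ∈ K. Let d' : M → M → ℝ be a second distance function on M (so d' x y ≥ 0, d' x y = 0 if and only if x = y, d' x y = d' y x, and d' x z ≤ d' x y + d' y z for all x, y, z) which induces the same topology on M as d, and assume that every isometric self-equivalence h of (M, d) is also an isometry for d', i.e., d' (h x) (h y) = d' x y for all x, y. Then (M, d') is a complete metric space: every sequence in M that is Cauchy with respect to d' converges to a point of M. -/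
open Filter Topology

/-- Abstract form of Lemma 3.2 / Theorem 3.3: if `M` is a locally compact metric space that
is quasi-homogeneous, and `d'` is a second distance function on `M` inducing the same
topology and invariant under all isometric self-equivalences of `M`, then `(M, d')` is
complete: every `d'`-Cauchy sequence converges. -/
theorem quasiHomogeneous_second_metric_complete {M : Type*} [MetricSpace M]
    [LocallyCompactSpace M]
    (K : Set M) (hK : IsCompact K)
    (hqh : ∀ x : M, ∃ h : M ≃ᵢ M, h x ∈ K)
    (d' : M → M → ℝ)
    (h_nonneg : ∀ x y : M, 0 ≤ d' x y)
    (h_eq_zero : ∀ x y : M, d' x y = 0 ↔ x = y)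
    (h_symm : ∀ x y : M, d' x y = d' y x)
    (h_triangle : ∀ x y z : M, d' x z ≤ d' x y + d' y z)
    (h_topology : ∀ x : M, (𝓝 x).HasBasis (fun ε : ℝ => 0 < ε)
      (fun ε => {y : M | d' x y < ε}))
    (h_invariant : ∀ (h : M ≃ᵢ M) (x y : M), d' (h x) (h y) = d' x y)
    (u : ℕ → M)
    (h_cauchy : ∀ ε : ℝ, 0 < ε → ∃ N : ℕ, ∀ m n : ℕ, N ≤ m → N ≤ n → d' (u m) (u n) < ε) :
    ∃ x : M, Tendsto u atTop (𝓝 x) := by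
  classical
  -- Step 1 : a uniform `ε` and compact `L` absorbing `d'`-balls around points of `K`.
  have key : ∃ ε > 0, ∃ L : Set M, IsCompact L ∧ ∀ x ∈ K, ∀ y, d' x y < ε → y ∈ L := by
    choose C hCcomp hCnhds using fun x : M => exists_compact_mem_nhds (x := x)
    have hball : ∀ x : M, ∃ ε, 0 < ε ∧ {y | d' x y < ε} ⊆ C x := fun x =>
      (h_topology x).mem_iff.mp (hCnhds x)
    choose εf hεf hsub using hball
    have hcover : K ⊆ ⋃ x ∈ K, interior {y | d' x y < εf x / 2} := by
      intro x hx
      refine Set.mem_iUnion₂.mpr ⟨x, hx, ?_⟩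
      exact mem_interior_iff_mem_nhds.mpr ((h_topology x).mem_of_mem (by
        have := hεf x; linarith))
    obtain ⟨t, htK, htfin, htcover⟩ :=
      hK.elim_finite_subcover_image (fun x _ => isOpen_interior) hcover
    set s : Finset ℝ := insert 1 (htfin.toFinset.image (fun x => εf x / 2)) with hs
    have hsne : s.Nonempty := ⟨1, Finset.mem_insert_self _ _⟩
    have hspos : 0 < s.min' hsne := by
      rw [Finset.lt_min'_iff]
      intro y hy
      rcases Finset.mem_insert.mp hy with rfl | hy
      · norm_num
      · obtain ⟨i, _, rfl⟩ := Finset.mem_image.mp hy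
        have := hεf i; linarith
    refine ⟨s.min' hsne, hspos, ⋃ x ∈ t, C x,
      htfin.isCompact_biUnion (fun x _ => hCcomp x), ?_⟩
    intro x hx y hy
    obtain ⟨i, hit, hxi⟩ := Set.mem_iUnion₂.mp (htcover hx)
    have hxi' : d' i x < εf i / 2 := by
      have : x ∈ {y | d' i y < εf i / 2} := interior_subset hxi
      exact this
    have hmin : s.min' hsne ≤ εf i / 2 :=
      Finset.min'_le _ _
        (Finset.mem_insert_of_mem (Finset.mem_image_of_mem _ (htfin.mem_toFinset.mpr hit)))
    have : d' i y < εf i := by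
      have := h_triangle i x y
      linarith
    exact Set.mem_biUnion hit (hsub i this)
  obtain ⟨ε, hε, L, hLcomp, hL⟩ := key
  -- Step 2 : translate a tail of the sequence so that it lies in `L`.
  obtain ⟨N, hN⟩ := h_cauchy ε hε
  obtain ⟨h, hh⟩ := hqh (u N)
  set v : ℕ → M := fun n => h (u (N + n)) with hv
  have hvL : ∀ n, v n ∈ L := by
    intro n
    apply hL _ hh
    rw [hv]
    simp only
    rw [h_invariant]
    exact hN N (N + n) le_rfl (Nat.le_add_right _ _)
  obtain ⟨y, hyL, φ, hφ, hvy⟩ := hLcomp.tendsto_subseq hvL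
  -- Step 3 : Cauchy + convergent subsequence ⇒ convergence of `v` to `y`.
  have hv_cauchy : ∀ ε' : ℝ, 0 < ε' → ∃ N' : ℕ, ∀ m n : ℕ, N' ≤ m → N' ≤ n →
      d' (v m) (v n) < ε' := by
    intro ε' hε'
    obtain ⟨N', hN'⟩ := h_cauchy ε' hε'
    refine ⟨N', fun m n hm hn => ?_⟩
    rw [hv]; simp only; rw [h_invariant]
    exact hN' _ _ (le_trans hm (Nat.le_add_left _ _)) (le_trans hn (Nat.le_add_left _ _))
  have hv_tendsto : Tendsto v atTop (𝓝 y) := by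
    rw [(h_topology y).tendsto_right_iff]
    intro ε' hε'
    obtain ⟨N', hN'⟩ := hv_cauchy (ε' / 2) (by linarith)
    have hsub' : ∀ᶠ k in atTop, d' y (v (φ k)) < ε' / 2 := by
      have := ((h_topology y).tendsto_right_iff.mp hvy) (ε' / 2) (by linarith)
      simpa using this
    obtain ⟨k0, hk0⟩ := eventually_atTop.mp hsub'
    set k := max k0 N' with hk
    have hφk : N' ≤ φ k := le_trans (le_max_right _ _) (hφ.le_apply)
    have hyk : d' y (v (φ k)) < ε' / 2 := hk0 k (le_max_left _ _)
    filter_upwards [eventually_ge_atTop N'] with n hn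
    have h1 : d' (v (φ k)) (v n) < ε' / 2 := hN' _ _ hφk hn
    have h2 := h_triangle y (v (φ k)) (v n)
    show d' y (v n) < ε'
    linarith
  -- Step 4 : translate back.
  refine ⟨h.symm y, ?_⟩
  have h1 : Tendsto (fun n => u (N + n)) atTop (𝓝 (h.symm y)) := by
    have := (h.symm.continuous.tendsto y).comp hv_tendsto
    convert this using 1
    funext n
    simp [hv]
  have h2 : Tendsto (fun n => u (n + N)) atTop (𝓝 (h.symm y)) := by
    simpa [Nat.add_comm] using h1
  exact (tendsto_add_atTop_iff_nat N).mp h2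
end
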